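/- arXiv:2404.08499 — 3 statements merged into one kernel-verified Lean document; each statement's English description precedes it below -/
import Mathlib

section
/- Let N ≥ 3 and let a : ℝ → (0,∞)^{2N} be a differentiable curve. Then a satisfies the periodic Volterra lattice equations ȧ_j = a_j(a_{j+1} − a_{j−1}) for all j if and only if the matrices L(a(t)) and A(a(t)) satisfy the Lax equation d/dt L(a(t)) = A(a(t))·L(a(t)) − L(a(t))·A(a(t)) for all t. -/
/-!
Write `s = √a`. Both Lax matrices are periodic band matrices: `L(a)` has `s i` at `(i, i + 1)`
and `-s (i - 1)` at `(i, i - 1)`, while `A(a)` lives on the diagonals `±2` with entries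
`±s i s (i + 1) / 2`. A product of band matrices is a band matrix whose shift is the sum of the
shifts, so `[A, L]` lives on the diagonals `±1` and `±3`; the `±3` parts cancel, and `[A, L]` is
again of the shape of `L`, with `s i (a (i + 1) - a (i - 1)) / 2` in place of `s i`. The Lax
equation is therefore `d/dt √aⱼ = √aⱼ (aⱼ₊₁ - aⱼ₋₁) / 2`, which for positive `aⱼ` is the
Volterra equation. Reading `d/dt √aⱼ` off the entry `(j, j + 1)` needs `j + 1 ≠ j - 1`,
i.e. `2 ≠ 0` in `ZMod (2N)`.
-/

open Matrix

instance neZeroTwoMul (N : ℕ) [NeZero N] : NeZero (2 * N) :=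
  ⟨by have := NeZero.ne N; omega⟩

/-- `Emat N r s` is the `2N × 2N` real matrix with a `1` in position `(r, s)`
and zeros elsewhere, indices taken mod `2N`. -/
noncomputable def Emat (N : ℕ) [NeZero N] (r s : ZMod (2 * N)) :
    Matrix (ZMod (2 * N)) (ZMod (2 * N)) ℝ :=
  Matrix.single r s 1

/-- The antisymmetric Lax matrix of the Volterra lattice:
`L(a) = ∑ j, √(a j) • (E_{j,j+1} - E_{j+1,j})`. -/
noncomputable def LaxL (N : ℕ) [NeZero N] (a : ZMod (2 * N) → ℝ) :
    Matrix (ZMod (2 * N)) (ZMod (2 * N)) ℝ :=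
  ∑ j : ZMod (2 * N), Real.sqrt (a j) • (Emat N j (j + 1) - Emat N (j + 1) j)

/-- The companion matrix of the Volterra lattice:
`A(a) = (1/2) ∑ j, √(a j * a (j+1)) • (E_{j+2,j} - E_{j,j+2})`. -/
noncomputable def LaxA (N : ℕ) [NeZero N] (a : ZMod (2 * N) → ℝ) :
    Matrix (ZMod (2 * N)) (ZMod (2 * N)) ℝ :=
  (1 / 2 : ℝ) • ∑ j : ZMod (2 * N),
    Real.sqrt (a j * a (j + 1)) • (Emat N (j + 2) j - Emat N j (j + 2))

namespace Matrix

variable {G R : Type*} [AddCommGroup G] [DecidableEq G]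

def bandMatrix [Zero R] (p : G) (c : G → R) : Matrix G G R :=
  of fun i k => if k = i + p then c i else 0

@[simp]
lemma bandMatrix_apply [Zero R] (p : G) (c : G → R) (i k : G) :
    bandMatrix p c i k = if k = i + p then c i else 0 :=
  rfl

variable [Fintype G]

lemma sum_smul_single_add [Semiring R] (p : G) (c : G → R) :
    ∑ j, c j • single j (j + p) (1 : R) = bandMatrix p c := by
  ext i k
  simp [sum_apply, single_apply, ite_and, eq_comm]

lemma sum_smul_single_add_left [Semiring R] (p : G) (c : G → R) :
    ∑ j, c j • single (j + p) j (1 : R) = bandMatrix (-p) fun i => c (i - p) := by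
  rw [← sum_smul_single_add]
  exact Fintype.sum_equiv (Equiv.addRight p) _ _ fun j => by simp [← sub_eq_add_neg]

lemma bandMatrix_mul_bandMatrix [NonUnitalNonAssocSemiring R] (p q : G) (c d : G → R) :
    bandMatrix p c * bandMatrix q d = bandMatrix (p + q) fun i => c i * d (i + p) := by
  ext i k
  rw [mul_apply, Finset.sum_eq_single (i + p) (fun j _ hj => by simp [hj]) (by simp)]
  simp [add_assoc]

end Matrix

section LaxPair

variable {G R : Type*} [CommRing G] [DecidableEq G]

def skewBand [AddGroup R] (s : G → R) : Matrix G G R :=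
  bandMatrix 1 s - bandMatrix (-1) fun i => s (i - 1)

lemma skewBand_apply_add_one [AddGroup R] (h2 : (2 : G) ≠ 0) (s : G → R) (i : G) :
    skewBand s i (i + 1) = s i := by
  have : i + 1 ≠ i + -1 := fun h => h2 (by linear_combination h)
  simp [skewBand, this]

lemma hasDerivAt_skewBand_apply {𝕜 : Type*} [NontriviallyNormedField 𝕜] {s : 𝕜 → G → 𝕜}
    {s' : G → 𝕜} {t : 𝕜} (hs : ∀ j, HasDerivAt (fun t => s t j) (s' j) t) (i k : G) :
    HasDerivAt (fun t => skewBand (s t) i k) (skewBand s' i k) t := by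
  simp only [skewBand, Matrix.sub_apply, bandMatrix_apply]
  refine HasDerivAt.sub ?_ ?_ <;> split_ifs
  all_goals first | exact hs _ | exact hasDerivAt_const _ _

def companionBand [Field R] (s : G → R) : Matrix G G R :=
  (1 / 2 : R) • (bandMatrix (-2) (fun i => s (i - 2) * s (i - 1)) -
    bandMatrix 2 fun i => s i * s (i + 1))

lemma companionBand_mul_skewBand_sub [Fintype G] [Field R] (s : G → R) :
    companionBand s * skewBand s - skewBand s * companionBand s =
      skewBand fun i => s i * (s (i + 1) ^ 2 - s (i - 1) ^ 2) / 2 := by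
  simp only [companionBand, skewBand, Matrix.smul_mul, Matrix.mul_smul, sub_mul, mul_sub,
    bandMatrix_mul_bandMatrix]
  ext i k
  simp only [Matrix.sub_apply, Matrix.smul_apply, bandMatrix_apply, smul_eq_mul]
  -- normalizing first turns the shifts `-2 + 1`, `1 + -2`, ... into literally equal conditions
  ring_nf
  split_ifs <;> ring_nf

end LaxPair

lemma hasDerivAt_sqrt_comp_iff {f : ℝ → ℝ} {t c : ℝ} (hf : ∀ s, 0 < f s) :
    HasDerivAt (fun s => √(f s)) (√(f t) * c / 2) t ↔ HasDerivAt f (f t * c) t := by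
  have hsq : ∀ s, √(f s) * √(f s) = f s := fun s => Real.mul_self_sqrt (hf s).le
  constructor
  · intro h
    have h' := h.fun_mul h
    simp only [hsq] at h'
    exact h'.congr_deriv (by linear_combination c * hsq t)
  · intro h
    convert h.sqrt (hf t).ne' using 1
    have := Real.sqrt_pos.2 (hf t)
    field_simp
    linear_combination c * hsq t

lemma laxL_eq_skewBand (N : ℕ) [NeZero N] (a : ZMod (2 * N) → ℝ) :
    LaxL N a = skewBand fun j => √(a j) := by
  simp only [LaxL, Emat, smul_sub, Finset.sum_sub_distrib, sum_smul_single_add,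
    sum_smul_single_add_left, skewBand]

lemma laxA_eq_companionBand (N : ℕ) [NeZero N] {a : ZMod (2 * N) → ℝ} (ha : ∀ j, 0 ≤ a j) :
    LaxA N a = companionBand fun j => √(a j) := by
  simp only [LaxA, Emat, smul_sub, Finset.sum_sub_distrib, sum_smul_single_add,
    sum_smul_single_add_left, companionBand, Real.sqrt_mul (ha _),
    show ∀ i : ZMod (2 * N), i - 2 + 1 = i - 1 from fun i => by ring]

theorem volterra_iff_lax_general (N : ℕ) [NeZero N] (hN : 3 ≤ N)
    (a : ℝ → ZMod (2 * N) → ℝ)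
    (hpos : ∀ t j, 0 < a t j) :
    (∀ t j, HasDerivAt (fun s => a s j) (a t j * (a t (j + 1) - a t (j - 1))) t)
      ↔ (∀ t i j, HasDerivAt (fun s => LaxL N (a s) i j)
          ((LaxA N (a t) * LaxL N (a t) - LaxL N (a t) * LaxA N (a t)) i j) t) := by
  have h2 : (2 : ZMod (2 * N)) ≠ 0 := by
    exact_mod_cast (ZMod.natCast_eq_zero_iff 2 (2 * N)).not.2
      (Nat.not_dvd_of_pos_of_lt two_pos (by omega))
  have hcomm : ∀ t, LaxA N (a t) * LaxL N (a t) - LaxL N (a t) * LaxA N (a t) =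
      skewBand fun j => √(a t j) * (a t (j + 1) - a t (j - 1)) / 2 := fun t => by
    rw [laxA_eq_companionBand N fun j => (hpos t j).le, laxL_eq_skewBand,
      companionBand_mul_skewBand_sub]
    simp only [Real.sq_sqrt (hpos t _).le]
  simp_rw [hcomm, laxL_eq_skewBand]
  constructor
  · intro h t
    exact hasDerivAt_skewBand_apply fun j => (hasDerivAt_sqrt_comp_iff (hpos · j)).2 (h t j)
  · intro h t j
    refine (hasDerivAt_sqrt_comp_iff (hpos · j)).1 ?_
    simpa only [skewBand_apply_add_one h2] using h t j (j + 1)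

/-- A differentiable positive curve `a` satisfies the periodic Volterra lattice equations
iff the pair `(L, A)` satisfies the Lax equation `d/dt L(a(t)) = [A(a(t)), L(a(t))]`. -/
theorem volterra_iff_lax (N : ℕ) [NeZero N] (hN : 3 ≤ N)
    (a : ℝ → ZMod (2 * N) → ℝ)
    (hpos : ∀ t j, 0 < a t j)
    (hdiff : ∀ j, Differentiable ℝ fun t => a t j) :
    (∀ t j, HasDerivAt (fun s => a s j) (a t j * (a t (j + 1) - a t (j - 1))) t)
      ↔ (∀ t i j, HasDerivAt (fun s => LaxL N (a s) i j)
          ((LaxA N (a t) * LaxL N (a t) - LaxL N (a t) * LaxA N (a t)) i j) t) :=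
  volterra_iff_lax_general N hN a hpos
end

section
/- Let N ≥ 3 and let a : ℝ → (0,∞)^{2N} be a differentiable solution of the periodic Volterra lattice equations ȧ_j = a_j(a_{j+1} − a_{j−1}). Then for every n ∈ ℕ the conserved field Q^{[n]}(t) = (−1)^n · trace(L(a(t))^{2n}) is constant in t. -/
open Matrix

/-!
Along a solution, `L = L(a(t))` satisfies the Lax equation `L̇ = [L, B]` with
`B = ½ ∑ j, √(a j a (j+1)) • (E_{j,j+2} - E_{j+2,j})`. Hence the derivative of `trace (L ^ m)`
is a sum of terms `trace (L ^ p * [L, B] * L ^ q)`, each of which vanishes by cyclicity of the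
trace. The Lax equation itself is a computation with weighted shift matrices, whose products are
again weighted shifts.
-/

namespace Matrix

variable {ι R : Type*} [AddCommGroup ι] [DecidableEq ι]

def weightedShift [Zero R] (k : ι) (f : ι → R) : Matrix ι ι R :=
  of fun i j => if j = i + k then f i else 0

/-- This is `weightedShift k f - (weightedShift k f)ᵀ`. -/
def antisymmShift [AddGroup R] (k : ι) (f : ι → R) : Matrix ι ι R :=
  weightedShift k f - weightedShift (-k) fun i => f (i - k)

theorem weightedShift_mul_weightedShift [Fintype ι] [NonUnitalNonAssocSemiring R] (k l : ι)
    (f g : ι → R) :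
    weightedShift k f * weightedShift l g = weightedShift (k + l) fun i => f i * g (i + k) := by
  ext i m
  simp only [weightedShift, mul_apply, of_apply, ite_mul, zero_mul]
  rw [Finset.sum_ite_eq']
  simp [add_assoc]

theorem antisymmShift_mul_left [NonUnitalNonAssocRing R] (k : ι) (r : R) (f : ι → R) :
    antisymmShift k (fun i => r * f i) = r • antisymmShift k f := by
  ext i m
  simp only [antisymmShift, weightedShift, sub_apply, smul_apply, of_apply, smul_eq_mul, mul_sub]
  split_ifs <;> simp

theorem sum_smul_single_sub_single [Fintype ι] [NonAssocRing R] (k : ι) (f : ι → R) :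
    ∑ j, f j • (single j (j + k) 1 - single (j + k) j 1) = antisymmShift k f := by
  ext i m
  simp only [antisymmShift, weightedShift, sum_apply, smul_apply, sub_apply, of_apply,
    single_apply, smul_eq_mul, mul_sub, mul_ite, mul_one, mul_zero, Finset.sum_sub_distrib]
  simp_rw [← eq_sub_iff_add_eq, ite_and]
  simp only [Finset.sum_ite_eq', Finset.mem_univ, if_true]
  congr 1
  · exact if_congr (by rw [eq_sub_iff_add_eq, eq_comm]) rfl rfl
  · exact if_congr (by rw [← sub_eq_add_neg, eq_comm]) rfl rfl

theorem antisymmShift_volterra_commutator [Fintype ι] [CommRing R] (s : ι) (c : ι → R) :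
    antisymmShift s c * antisymmShift (s + s) (fun j => c j * c (j + s))
      - antisymmShift (s + s) (fun j => c j * c (j + s)) * antisymmShift s c
      = antisymmShift s fun j => c j * (c (j + s) ^ 2 - c (j - s) ^ 2) := by
  simp only [antisymmShift, mul_sub, sub_mul, weightedShift_mul_weightedShift]
  -- The eight products are weighted shifts by `±s` and `±3s`. Since these shifts may coincide
  -- in a small group, compare entries case by case: the `±3s` terms cancel in pairs.
  ext i m
  simp only [weightedShift, of_apply, sub_apply]
  abel_nf
  split_ifs <;> ring_nf

end Matrix

theorem trace_pow_mul_commutator_mul_pow {𝔸 F G : Type*} [Ring 𝔸] [AddCommGroup F]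
    [FunLike G 𝔸 F] [AddMonoidHomClass G 𝔸 F] (τ : G) (hτ : ∀ x y, τ (x * y) = τ (y * x))
    (x b : 𝔸) (p q : ℕ) : τ (x ^ p * (x * b - b * x) * x ^ q) = 0 := by
  have cycle : ∀ u v, τ (x ^ u * b * x ^ v) = τ (b * x ^ (v + u)) := fun u v => by
    rw [mul_assoc, hτ, mul_assoc, ← pow_add]
  calc τ (x ^ p * (x * b - b * x) * x ^ q)
      = τ (x ^ (p + 1) * b * x ^ q) - τ (x ^ p * b * x ^ (q + 1)) := by
        rw [pow_succ, pow_succ']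
        simp only [mul_sub, sub_mul, map_sub, mul_assoc]
    _ = 0 := by rw [cycle, cycle, show q + (p + 1) = q + 1 + p by omega, sub_self]

theorem hasDerivAt_trace_pow_of_lax_equation {𝕜 𝔸 F : Type*} [NontriviallyNormedField 𝕜]
    [NormedRing 𝔸] [NormedAlgebra 𝕜 𝔸] [NormedAddCommGroup F] [NormedSpace 𝕜 F]
    (τ : 𝔸 →L[𝕜] F) (hτ : ∀ x y, τ (x * y) = τ (y * x)) {f : 𝕜 → 𝔸} {b : 𝔸} {t : 𝕜}
    (hf : HasDerivAt f (f t * b - b * f t) t) (m : ℕ) :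
    HasDerivAt (fun r => τ (f r ^ m)) 0 t := by
  have h := τ.hasFDerivAt.comp_hasDerivAt t (hf.fun_pow' m)
  rwa [map_sum, Finset.sum_eq_zero fun i _ => trace_pow_mul_commutator_mul_pow τ hτ _ _ _ _] at h

section Volterra

variable {N : ℕ} [NeZero N]

theorem laxL_eq_antisymmShift (a : ZMod (2 * N) → ℝ) :
    LaxL N a = antisymmShift 1 fun j => √(a j) :=
  sum_smul_single_sub_single 1 _

noncomputable def laxPartner (a : ZMod (2 * N) → ℝ) : Matrix (ZMod (2 * N)) (ZMod (2 * N)) ℝ :=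
  (2⁻¹ : ℝ) • antisymmShift 2 fun j => √(a j) * √(a (j + 1))

theorem laxL_mul_laxPartner_sub (a : ZMod (2 * N) → ℝ) (ha : ∀ j, 0 ≤ a j) :
    LaxL N a * laxPartner a - laxPartner a * LaxL N a
      = antisymmShift 1 fun j => 2⁻¹ * (√(a j) * (a (j + 1) - a (j - 1))) := by
  rw [laxPartner, mul_smul_comm, smul_mul_assoc, ← smul_sub, laxL_eq_antisymmShift,
    show (2 : ZMod (2 * N)) = 1 + 1 from one_add_one_eq_two.symm,
    antisymmShift_volterra_commutator, antisymmShift_mul_left]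
  simp only [Real.sq_sqrt (ha _)]

attribute [local instance] Matrix.linftyOpNormedRing Matrix.linftyOpNormedAlgebra

variable {a : ℝ → ZMod (2 * N) → ℝ} (hpos : ∀ t j, 0 < a t j)
  (hvolt : ∀ t j, HasDerivAt (fun s => a s j) (a t j * (a t (j + 1) - a t (j - 1))) t)
include hpos hvolt

theorem hasDerivAt_laxL (t : ℝ) :
    HasDerivAt (fun r => LaxL N (a r))
      (LaxL N (a t) * laxPartner (a t) - laxPartner (a t) * LaxL N (a t)) t := by
  have h : HasDerivAt (fun r => LaxL N (a r))
      (∑ j, (a t j * (a t (j + 1) - a t (j - 1)) / (2 * √(a t j))) •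
        (Emat N j (j + 1) - Emat N (j + 1) j)) t :=
    HasDerivAt.fun_sum fun j _ =>
      ((hvolt t j).sqrt (hpos t j).ne').smul_const (Emat N j (j + 1) - Emat N (j + 1) j)
  refine h.congr_deriv ?_
  rw [laxL_mul_laxPartner_sub _ fun j => (hpos t j).le, ← sum_smul_single_sub_single]
  refine Finset.sum_congr rfl fun j _ => ?_
  congr 1
  have hne := (Real.sqrt_pos.mpr (hpos t j)).ne'
  field_simp
  rw [Real.sq_sqrt (hpos t j).le]
  ring

theorem trace_laxL_pow_eq (m : ℕ) (t s : ℝ) :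
    (LaxL N (a t) ^ m).trace = (LaxL N (a s) ^ m).trace := by
  have h r : HasDerivAt (fun r => (LaxL N (a r) ^ m).trace) 0 r :=
    hasDerivAt_trace_pow_of_lax_equation (traceLinearMap _ ℝ ℝ).toContinuousLinearMap
      trace_mul_comm (hasDerivAt_laxL hpos hvolt r) m
  exact is_const_of_deriv_eq_zero (fun r => (h r).differentiableAt) (fun r => (h r).deriv) t s

end Volterra

theorem volterra_conserved_fields_general (N : ℕ) [NeZero N]
    (a : ℝ → ZMod (2 * N) → ℝ)
    (hpos : ∀ t j, 0 < a t j)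
    (hvolt : ∀ t j, HasDerivAt (fun s => a s j) (a t j * (a t (j + 1) - a t (j - 1))) t) :
    ∀ (n : ℕ) (t s : ℝ),
      (-1 : ℝ) ^ n * (LaxL N (a t) ^ (2 * n)).trace
        = (-1 : ℝ) ^ n * (LaxL N (a s) ^ (2 * n)).trace := by
  intro n t s
  rw [trace_laxL_pow_eq hpos hvolt (2 * n) t s]

/-- Along any differentiable positive solution of the periodic Volterra lattice, the
conserved fields `Q^{[n]}(t) = (-1)^n trace (L(a(t))^{2n})` are constant in time. -/
theorem volterra_conserved_fields (N : ℕ) [NeZero N] (hN : 3 ≤ N)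
    (a : ℝ → ZMod (2 * N) → ℝ)
    (hpos : ∀ t j, 0 < a t j)
    (hvolt : ∀ t j, HasDerivAt (fun s => a s j) (a t j * (a t (j + 1) - a t (j - 1))) t) :
    ∀ (n : ℕ) (t s : ℝ),
      (-1 : ℝ) ^ n * (LaxL N (a t) ^ (2 * n)).trace
        = (-1 : ℝ) ^ n * (LaxL N (a s) ^ (2 * n)).trace :=
  volterra_conserved_fields_general N a hpos hvolt
end

section
/- Let β > 0. Then: (i) the limit 𝔉_AG(β) := lim_{N→∞} [ ln 2 − (1/(2N)) Σ_{j=1}^{2N−1} ln Γ( (β/2)(1 − j/(2N)) ) ] exists and equals ln 2 − (1/β) ∫_0^β ln Γ(v/2) dv; and (ii) the function β ↦ β·𝔉_AG(β) is differentiable on (0,∞) with d/dβ ( β 𝔉_AG(β) ) = ln 2 − ln Γ(β/2), the right-hand side being the free energy 𝓕_Volt(β) = −lim_{N→∞} (1/(2N)) ln( 2^{−2N} Γ(β/2)^{2N} ) of the Volterra lattice with quadratic potential. -/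
open Filter MeasureTheory Set Topology
open scoped Interval

/-!
After the reflection `j ↦ 2N - j`, the sum in (i) is, up to the term at `t = 1`, a
right-endpoint Riemann sum of `f t = log Γ(β t / 2)` on `[0, 1]`. This `f` is continuous on
`(0, 1]` and, by `log Γ(x) = log Γ(x + 1) - log x`, bounded by the integrable decreasing
function `C - log t`. The Riemann sum is the integral of the step function
`t ↦ f (⌈n t⌉ / n)`, and since `⌈n t⌉ / n ∈ [t, 1]` that step function is dominated by
`C - log t` as well, so dominated convergence gives the limit. Part (ii) is then the
fundamental theorem of calculus.
-/

theorem Nat.ceil_eq_succ_of_mem_Ioc {k : ℕ} {u : ℝ} (hu : u ∈ Ioc (k : ℝ) (k + 1)) :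
    ⌈u⌉₊ = k + 1 := by
  rw [Nat.ceil_eq_iff k.succ_ne_zero]
  push_cast
  simpa using hu

theorem intervalIntegral.integral_comp_natCeil (h : ℕ → ℝ) (n : ℕ) :
    ∫ u in (0 : ℝ)..n, h ⌈u⌉₊ = ∑ k ∈ Finset.range n, h (k + 1) := by
  have hpiece (k : ℕ) :
      EqOn (fun u : ℝ => h ⌈u⌉₊) (fun _ => h (k + 1)) (Ι (k : ℝ) (k + 1 : ℕ)) := by
    intro u hu
    rw [uIoc_of_le (by simp), Nat.cast_succ] at hu
    simp [Nat.ceil_eq_succ_of_mem_Ioc hu]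
  rw [← Nat.cast_zero, ← intervalIntegral.sum_integral_adjacent_intervals
    fun k _ => (intervalIntegrable_congr (hpiece k)).2 intervalIntegrable_const]
  refine Finset.sum_congr rfl fun k _ => ?_
  rw [intervalIntegral.integral_congr_ae (Eventually.of_forall fun u hu => hpiece k hu)]
  simp

theorem intervalIntegral.integral_natCeil_mul_div (f : ℝ → ℝ) {n : ℕ} (hn : n ≠ 0) :
    ∫ t in (0 : ℝ)..1, f (⌈n * t⌉₊ / n) =
      (1 / n) * ∑ k ∈ Finset.Icc 1 n, f (k / n) := by
  have hn' : (n : ℝ) ≠ 0 := Nat.cast_ne_zero.2 hn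
  rw [intervalIntegral.integral_comp_mul_left (fun u => f (⌈u⌉₊ / n)) hn', mul_zero, mul_one,
    integral_comp_natCeil (fun k => f (k / n)), smul_eq_mul, one_div, Finset.range_eq_Ico,
    Finset.sum_Ico_add' (fun k : ℕ => f (k / n)), zero_add, Finset.Ico_add_one_right_eq_Icc]

theorem natCeil_mul_div_mem_Icc {n : ℕ} (hn : n ≠ 0) {t : ℝ} (ht : t ≤ 1) :
    (⌈n * t⌉₊ : ℝ) / n ∈ Icc t 1 := by
  have hn' : (0 : ℝ) < n := by positivity
  refine ⟨?_, ?_⟩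
  · rw [le_div_iff₀ hn', mul_comm]
    exact Nat.le_ceil _
  · rw [div_le_one hn']
    exact_mod_cast Nat.ceil_le.2 (by simpa using mul_le_of_le_one_right hn'.le ht)

theorem tendsto_natCeil_mul_div {t : ℝ} (ht : 0 ≤ t) :
    Tendsto (fun n : ℕ => (⌈n * t⌉₊ : ℝ) / n) atTop (𝓝 t) := by
  refine tendsto_of_tendsto_of_tendsto_of_le_of_le' (h := fun n : ℕ => t + 1 / n)
    tendsto_const_nhds
    (by simpa using (tendsto_const_nhds (x := t)).add tendsto_one_div_atTop_nhds_zero_nat) ?_ ?_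
  all_goals filter_upwards [eventually_gt_atTop 0] with n hn
  · rw [le_div_iff₀ (by positivity), mul_comm]
    exact Nat.le_ceil _
  · rw [div_le_iff₀ (by positivity), add_mul, one_div_mul_cancel (by positivity), mul_comm]
    exact (Nat.ceil_lt_add_one (by positivity)).le

theorem tendsto_riemannSum_of_abs_le_antitoneOn {f g : ℝ → ℝ} (hf : ContinuousOn f (Ioc 0 1))
    (hg : AntitoneOn g (Ioc 0 1)) (hfg : ∀ t ∈ Ioc (0 : ℝ) 1, |f t| ≤ g t)
    (hg_int : IntervalIntegrable g volume 0 1) :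
    Tendsto (fun n : ℕ => (1 / n) * ∑ k ∈ Finset.Icc 1 n, f (k / n)) atTop
      (𝓝 (∫ t in (0 : ℝ)..1, f t)) := by
  have hstep : Tendsto (fun n : ℕ => ∫ t in (0 : ℝ)..1, f (⌈n * t⌉₊ / n)) atTop
      (𝓝 (∫ t in (0 : ℝ)..1, f t)) := by
    refine intervalIntegral.tendsto_integral_filter_of_dominated_convergence g ?_ ?_ hg_int ?_
    · exact Eventually.of_forall fun n => ((measurable_of_countable fun k : ℕ => f (k / n)).comp
        (Nat.measurable_ceil.comp (measurable_const_mul _))).aestronglyMeasurable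
    · filter_upwards [eventually_ne_atTop 0] with n hn
      refine Eventually.of_forall fun t ht => ?_
      rw [uIoc_of_le zero_le_one] at ht
      have hs := natCeil_mul_div_mem_Icc hn ht.2
      have hs' : (⌈n * t⌉₊ : ℝ) / n ∈ Ioc 0 1 := ⟨ht.1.trans_le hs.1, hs.2⟩
      exact (hfg _ hs').trans (hg ht hs' hs.1)
    · refine Eventually.of_forall fun t ht => ?_
      rw [uIoc_of_le zero_le_one] at ht
      refine (hf t ht).tendsto.comp
        (tendsto_nhdsWithin_iff.2 ⟨tendsto_natCeil_mul_div ht.1.le, ?_⟩)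
      filter_upwards [eventually_ne_atTop 0] with n hn
      have hs := natCeil_mul_div_mem_Icc hn ht.2
      exact ⟨ht.1.trans_le hs.1, hs.2⟩
  refine hstep.congr' ?_
  filter_upwards [eventually_ne_atTop 0] with n hn using
    intervalIntegral.integral_natCeil_mul_div f hn

theorem Finset.sum_Icc_sub_one_comp_one_sub_div (f : ℝ → ℝ) (n : ℕ) :
    ∑ j ∈ Finset.Icc 1 (n - 1), f (1 - j / n) = ∑ k ∈ Finset.Icc 1 (n - 1), f (k / n) := by
  refine Finset.sum_nbij' (n - ·) (n - ·) ?_ ?_ ?_ ?_ ?_ <;> intro j hj <;>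
    simp only [mem_Icc, Finset.mem_Icc] at hj ⊢
  iterate 4 omega
  rw [Nat.cast_sub (by omega), sub_div, div_self (by norm_cast; omega)]

theorem tendsto_riemannSum_Icc_sub_one {f : ℝ → ℝ} {L : ℝ}
    (h : Tendsto (fun n : ℕ => (1 / n) * ∑ k ∈ Finset.Icc 1 n, f (k / n)) atTop (𝓝 L)) :
    Tendsto (fun n : ℕ => (1 / n) * ∑ k ∈ Finset.Icc 1 (n - 1), f (k / n)) atTop
      (𝓝 L) := by
  have hlast := (tendsto_const_nhds (x := f 1)).mul tendsto_one_div_atTop_nhds_zero_nat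
  rw [mul_zero] at hlast
  refine (sub_zero L ▸ h.sub hlast).congr' ?_
  filter_upwards [eventually_ne_atTop 0] with n hn
  obtain ⟨m, rfl⟩ := Nat.exists_eq_succ_of_ne_zero hn
  rw [Finset.sum_Icc_succ_top (by omega), div_self (by positivity), Nat.succ_sub_one]
  ring

namespace Real

theorem continuousOn_log_Gamma : ContinuousOn (fun x => log (Gamma x)) (Ioi 0) :=
  differentiableOn_Gamma_Ioi.continuousOn.log fun _ hx => (Gamma_pos_of_pos hx).ne'

theorem exists_abs_log_Gamma_le (b : ℝ) :
    ∃ C, ∀ x ∈ Ioc 0 b, |log (Gamma x)| ≤ C + |log x| := by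
  obtain ⟨C, hC⟩ := isCompact_Icc.exists_bound_of_continuousOn
    (continuousOn_log_Gamma.mono fun y (hy : y ∈ Icc 1 (b + 1)) => zero_lt_one.trans_le hy.1)
  refine ⟨C, fun x ⟨hx0, hxb⟩ => ?_⟩
  have hrec : log (Gamma x) = log (Gamma (x + 1)) - log x := by
    rw [Gamma_add_one hx0.ne', log_mul hx0.ne' (Gamma_pos_of_pos hx0).ne']
    ring
  rw [hrec]
  refine (abs_sub _ _).trans (add_le_add_left ?_ _)
  simpa using hC (x + 1) ⟨by linarith, by linarith⟩

theorem intervalIntegrable_log_Gamma {b : ℝ} (hb : 0 ≤ b) :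
    IntervalIntegrable (fun x => log (Gamma x)) volume 0 b := by
  obtain ⟨C, hC⟩ := exists_abs_log_Gamma_le b
  refine ((intervalIntegrable_const (c := C)).add
    intervalIntegral.intervalIntegrable_log'.abs).mono_fun' ?_ ?_ <;>
    rw [uIoc_of_le hb]
  · exact (continuousOn_log_Gamma.mono Ioc_subset_Ioi_self).aestronglyMeasurable measurableSet_Ioc
  · exact (ae_restrict_iff' measurableSet_Ioc).2 (Eventually.of_forall hC)

theorem continuousOn_log_Gamma_div_two : ContinuousOn (fun v => log (Gamma (v / 2))) (Ioi 0) :=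
  continuousOn_log_Gamma.comp (continuousOn_id.div_const 2) fun _ hv => mem_Ioi.2 (half_pos hv)

theorem hasDerivAt_integral_log_Gamma_div_two {β : ℝ} (hβ : 0 < β) :
    HasDerivAt (fun b => ∫ v in (0 : ℝ)..b, log (Gamma (v / 2))) (log (Gamma (β / 2))) β := by
  have hint : IntervalIntegrable (fun v => log (Gamma (v / 2))) volume 0 β := by
    simpa [div_eq_inv_mul] using
      (intervalIntegrable_log_Gamma (half_pos hβ).le).comp_mul_left (c := 2⁻¹)
  exact intervalIntegral.integral_hasDerivAt_right hint
    (continuousOn_log_Gamma_div_two.stronglyMeasurableAtFilter isOpen_Ioi β hβ)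
    (continuousOn_log_Gamma_div_two.continuousAt (Ioi_mem_nhds hβ))

theorem tendsto_riemannSum_log_Gamma {β : ℝ} (hβ : 0 < β) :
    Tendsto (fun n : ℕ => (1 / n) * ∑ k ∈ Finset.Icc 1 n, log (Gamma (β / 2 * (k / n))))
      atTop
      (𝓝 ((1 / β) * ∫ v in (0 : ℝ)..β, log (Gamma (v / 2)))) := by
  obtain ⟨C, hC⟩ := exists_abs_log_Gamma_le (β / 2)
  have hscale : ∫ t in (0 : ℝ)..1, log (Gamma (β / 2 * t)) =
      (1 / β) * ∫ v in (0 : ℝ)..β, log (Gamma (v / 2)) := by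
    rw [intervalIntegral.integral_comp_mul_left (fun x => log (Gamma x)) (half_pos hβ).ne',
      intervalIntegral.integral_comp_div (fun x => log (Gamma x)) two_ne_zero]
    simp only [mul_zero, mul_one, zero_div, smul_eq_mul]
    ring
  rw [← hscale]
  refine tendsto_riemannSum_of_abs_le_antitoneOn (g := fun t => C + |log (β / 2)| - log t)
    (continuousOn_log_Gamma.comp (continuousOn_const.mul continuousOn_id)
      fun t ht => mul_pos (half_pos hβ) ht.1)
    (fun s hs t _ hst => by linarith [log_le_log hs.1 hst]) (fun t ⟨ht0, ht1⟩ => ?_)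
    (intervalIntegrable_const.sub intervalIntegral.intervalIntegrable_log')
  calc |log (Gamma (β / 2 * t))| ≤ C + |log (β / 2 * t)| :=
        hC _ ⟨by positivity, mul_le_of_le_one_right (half_pos hβ).le ht1⟩
    _ ≤ C + (|log (β / 2)| + |log t|) := by
        rw [log_mul (half_pos hβ).ne' ht0.ne']
        gcongr
        exact abs_add_le _ _
    _ = C + |log (β / 2)| - log t := by
        rw [abs_of_nonpos (log_nonpos ht0.le ht1)]
        ring

end Real

/-- (i) The high-temperature free energy of the Antisymmetric Gaussian β ensemble with
quadratic potential, `𝔉_AG(β) = lim_N [ln 2 − (1/(2N)) Σ_{j=1}^{2N−1} ln Γ((β/2)(1 − j/(2N)))]`,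
exists and equals `ln 2 − (1/β) ∫₀^β ln Γ(v/2) dv`;
(ii) `β ↦ β 𝔉_AG(β)` is differentiable on `(0,∞)` with derivative
`ln 2 − ln Γ(β/2)`, which is the Volterra free energy
`𝓕_Volt(β) = −lim_N (1/(2N)) ln(2^{−2N} Γ(β/2)^{2N})`. -/
theorem antisymmetric_free_energy (β : ℝ) (hβ : 0 < β) :
    Tendsto (fun N : ℕ =>
        Real.log 2 - (1 / (2 * (N : ℝ))) * ∑ j ∈ Finset.Icc 1 (2 * N - 1),
          Real.log (Real.Gamma ((β / 2) * (1 - (j : ℝ) / (2 * (N : ℝ))))))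
      atTop
      (nhds (Real.log 2 - (1 / β) * ∫ v in (0 : ℝ)..β, Real.log (Real.Gamma (v / 2))))
    ∧ HasDerivAt
        (fun b : ℝ =>
          b * (Real.log 2 - (1 / b) * ∫ v in (0 : ℝ)..b, Real.log (Real.Gamma (v / 2))))
        (Real.log 2 - Real.log (Real.Gamma (β / 2))) β
    ∧ Tendsto (fun N : ℕ =>
        -((1 / (2 * (N : ℝ))) *
          Real.log ((2 : ℝ) ^ (-(2 * (N : ℤ))) * Real.Gamma (β / 2) ^ (2 * N))))
        atTop (nhds (Real.log 2 - Real.log (Real.Gamma (β / 2)))) := by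
  refine ⟨?_, ?_, ?_⟩
  · have hsum := (tendsto_riemannSum_Icc_sub_one (f := fun s => Real.log (Real.Gamma (β / 2 * s)))
      (Real.tendsto_riemannSum_log_Gamma hβ)).comp
      (tendsto_id.const_mul_atTop' two_pos : Tendsto (fun N : ℕ => 2 * N) atTop atTop)
    refine (hsum.const_sub _).congr fun N => ?_
    rw [Function.comp_apply,
      ← Finset.sum_Icc_sub_one_comp_one_sub_div fun s => Real.log (Real.Gamma (β / 2 * s)),
      Nat.cast_mul, Nat.cast_two]
  · refine ((hasDerivAt_mul_const (Real.log 2)).sub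
      (Real.hasDerivAt_integral_log_Gamma_div_two hβ)).congr_of_eventuallyEq ?_
    filter_upwards [eventually_ne_nhds hβ.ne'] with b hb
    rw [Pi.sub_apply, mul_sub, ← mul_assoc, mul_one_div_cancel hb, one_mul]
  · refine tendsto_const_nhds.congr' ?_
    filter_upwards [eventually_ne_atTop 0] with N hN
    have hΓ := Real.Gamma_pos_of_pos (half_pos hβ)
    rw [Real.log_mul (by positivity) (by positivity), Real.log_zpow, Real.log_pow]
    push_cast
    field_simp
    ring
end
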